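/- Let Π = (V, Λ, C, dom, Bad) be a CSP whose dependency graph D := D_Π is locally finite. Fix c ∈ C and r ∈ ℕ. Let I = (I_n)_{n∈ℕ} be an MT-sequence consistent with (Π_{c,r}, t) for some table t. Then, for any R > r, the MT-sequence I' := (I_n ∩ B_D(c,R))_{n∈ℕ} is also consistent with (Π_{c,r}, t). -/

import Mathlib

open MeasureTheory Set
open scoped ENNReal

/-- A constraint satisfaction problem (CSP): variables `V`, labels `Λ`, constraints `C`.
`dom c` is the finite set of variables of the constraint `c`, and `Bad c` is the set of
bad labelings `φ : dom c → Λ`. -/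
structure CSP (V : Type*) (Λ : Type*) (C : Type*) where
  dom : C → Set V
  dom_finite : ∀ c, (dom c).Finite
  Bad : (c : C) → Set (↥(dom c) → Λ)

namespace CSP

variable {V Λ C : Type*}

/-- A labeling `f : V → Λ` violates the constraint `c` if its restriction to `dom c`
is a bad labeling. -/
def violates (Φ : CSP V Λ C) (f : V → Λ) (c : C) : Prop :=
  (fun v : ↥(Φ.dom c) => f v) ∈ Φ.Bad c

/-- A solution of a CSP: a labeling satisfying every constraint. -/
def IsSolution (Φ : CSP V Λ C) (f : V → Λ) : Prop := ∀ c, ¬ Φ.violates f c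

/-- The dependency graph of a CSP: distinct constraints are adjacent iff their domains meet. -/
def depGraph (Φ : CSP V Λ C) : SimpleGraph C where
  Adj c c' := c ≠ c' ∧ (Φ.dom c ∩ Φ.dom c').Nonempty
  symm := by
    refine ⟨fun c c' h => ?_⟩
    exact ⟨h.1.symm, by rw [Set.inter_comm]; exact h.2⟩
  loopless := ⟨fun c h => h.1 rfl⟩

/-- `P[Bad(c)]`: the probability of the set of bad labelings of `c` with respect to the
product measure `P^{dom c}`. -/
noncomputable def badProb [MeasurableSpace Λ] (Φ : CSP V Λ C) (P : Measure Λ) (c : C) : ℝ≥0∞ :=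
  haveI := (Φ.dom_finite c).fintype
  Measure.pi (fun _ : ↥(Φ.dom c) => P) (Φ.Bad c)

end CSP

/-- The ball of radius `R` around `c`: vertices joined to `c` by a path of at most `R` edges. -/
def gball {C : Type*} (G : SimpleGraph C) (c : C) : ℕ → Set C
  | 0 => {c}
  | R + 1 => gball G c R ∪ ⋃ x ∈ gball G c R, G.neighborSet x

lemma gball_finite {C : Type*} (G : SimpleGraph C)
    (hlf : ∀ v, (G.neighborSet v).Finite) (c : C) : ∀ R, (gball G c R).Finite
  | 0 => Set.finite_singleton c
  | (R + 1) => ((gball_finite G hlf c R).union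
      ((gball_finite G hlf c R).biUnion (fun x _ => hlf x)))

/-- The growth function `γ_G(R) = sup_v |B_G(v,R)|`, valued in `ℕ∞`. -/
noncomputable def growth {C : Type*} (G : SimpleGraph C) (R : ℕ) : ℕ∞ :=
  ⨆ v, (gball G v R).encard

/-- The exponential growth rate `egr(G) = inf_{R ≥ 1} γ_G(R)^{1/R}`, valued in `ℝ≥0∞`. -/
noncomputable def egr {C : Type*} (G : SimpleGraph C) : ℝ≥0∞ :=
  ⨅ R : {n : ℕ // 1 ≤ n}, ((growth G R.1 : ℝ≥0∞) ^ ((R.1 : ℝ)⁻¹))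

/-- The closed neighborhood `N[c]` of a vertex in a graph. -/
def closedNbhd {C : Type*} (G : SimpleGraph C) (c : C) : Set C :=
  insert c (G.neighborSet c)

/-- A set of vertices is independent if no two of its members are adjacent. -/
def IsIndep {C : Type*} (G : SimpleGraph C) (s : Set C) : Prop :=
  ∀ c ∈ s, ∀ c' ∈ s, ¬ G.Adj c c'

section BorelCSP

variable {V Λ C : Type*}

/-- The finite set obtained as the image of a tuple. -/
noncomputable def finsetOfTuple {X : Type*} (n : ℕ) (t : Fin n → X) : Finset X :=
  haveI := Classical.decEq X
  Finset.image t Finset.univ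

/-- The standard Borel structure on the space of finite subsets of `X`: a set of finite sets is
measurable iff for each `n` its preimage under the map `(x_1, …, x_n) ↦ {x_1, …, x_n}` is
measurable. -/
noncomputable def finsetMS (X : Type*) [MeasurableSpace X] : MeasurableSpace (Finset X) :=
  ⨅ n : ℕ, MeasurableSpace.map (finsetOfTuple (X := X) n) MeasurableSpace.pi

/-- The graph of a labeling `φ : dom c → Λ`, as a finite subset of `V × Λ`; this encodes a finite
partial function `V ⇀ Λ`. -/
noncomputable def CSP.graphOf (Φ : CSP V Λ C) (c : C) (φ : ↥(Φ.dom c) → Λ) :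
    Finset (V × Λ) :=
  haveI := Classical.decEq (V × Λ)
  (Φ.dom_finite c).toFinset.attach.image
    (fun v => (v.1, φ ⟨v.1, (Φ.dom_finite c).mem_toFinset.mp v.2⟩))

/-- A CSP on standard Borel spaces is Borel if `dom` is a Borel map into the space of finite
subsets of `V` and `{(c, φ) : φ ∈ Bad c}` is Borel in `C × (finite partial functions V ⇀ Λ)`,
finite partial functions being encoded by their graphs. -/
structure IsBorelCSP [MeasurableSpace V] [MeasurableSpace Λ] [MeasurableSpace C]
    (Φ : CSP V Λ C) : Prop where
  dom_meas : Measurable[_, finsetMS V] (fun c => (Φ.dom_finite c).toFinset)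
  bad_meas : MeasurableSet[(inferInstance : MeasurableSpace C).prod (finsetMS (V × Λ))]
    {p : C × Finset (V × Λ) | ∃ φ ∈ Φ.Bad p.1, p.2 = Φ.graphOf p.1 φ}

end BorelCSP

section MT

variable {V Λ C : Type*}

open scoped Classical

/-- The level function of the Moser–Tardos algorithm run with the sequence `I` of chosen
independent sets: `lev_0(v) = 0` and `lev_{n+1}(v) = lev_n(v) + 1` exactly when `v` belongs to the
domain of some constraint in `I n`. -/
noncomputable def MTlev (Φ : CSP V Λ C) (I : ℕ → Set C) : ℕ → V → ℕ
  | 0, _ => 0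
  | n + 1, v => MTlev Φ I n v + (if ∃ c ∈ I n, v ∈ Φ.dom c then 1 else 0)

/-- The labeling used at step `n` of the Moser–Tardos algorithm with table `t`. -/
noncomputable def CSP.MTstep (Φ : CSP V Λ C) (t : V → ℕ → Λ) (I : ℕ → Set C)
    (n : ℕ) : V → Λ :=
  fun v => t v (MTlev Φ I n v)

/-- An MT-sequence `I` is consistent with `(Φ, t)` if it can be produced by the Moser–Tardos
algorithm on input `(Φ, t)`: each `I n` is an independent set of constraints violated by the
current labeling. -/
noncomputable def CSP.Consistent (Φ : CSP V Λ C) (t : V → ℕ → Λ) (I : ℕ → Set C) : Prop :=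
  (∀ n, IsIndep Φ.depGraph (I n)) ∧ ∀ n, ∀ c ∈ I n, Φ.violates (Φ.MTstep t I n) c

/-- An MT-sequence consistent with `(Φ, t)` that can be produced by the *maximal* Moser–Tardos
algorithm: each `I n` is a maximal independent subset of the set of violated constraints. -/
noncomputable def CSP.MaximalCons (Φ : CSP V Λ C) (t : V → ℕ → Λ) (I : ℕ → Set C) : Prop :=
  Φ.Consistent t I ∧
    ∀ n, ∀ c, Φ.violates (Φ.MTstep t I n) c → c ∉ I n → ∃ c' ∈ I n, Φ.depGraph.Adj c c'

/-- The levels at `v` stabilize, i.e. `lev(v) = lim_n lev_n(v) < ∞`: the output labeling of the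
run of the Moser–Tardos algorithm is defined at `v`. -/
def StabilizesAt (Φ : CSP V Λ C) (I : ℕ → Set C) (v : V) : Prop :=
  ∃ N, ∀ n, N ≤ n → MTlev Φ I n v = MTlev Φ I N v

/-- A table is good if every run of the Moser–Tardos algorithm on `(Φ, t)` produces a labeling
defined on all of `V`. -/
def CSP.GoodTable (Φ : CSP V Λ C) (t : V → ℕ → Λ) : Prop :=
  ∀ I : ℕ → Set C, Φ.Consistent t I → ∀ v, StabilizesAt Φ I v

/-- The `(c, r)`-local CSP `Π_{c,r}`: constraints at distance more than `r` from `c` in the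
dependency graph are always violated. -/
noncomputable def CSP.localCSP (Φ : CSP V Λ C) (c : C) (r : ℕ) : CSP V Λ C where
  dom := Φ.dom
  dom_finite := Φ.dom_finite
  Bad a := if a ∈ gball Φ.depGraph c r then Φ.Bad a else Set.univ

/-- A finite MT-sequence: `Σ_n |I_n| < ∞`. -/
def FiniteMTSeq {C : Type*} (I : ℕ → Set C) : Prop :=
  {q : C × ℕ | q.1 ∈ I q.2}.Finite

/-- A finite MT-sequence is `(c, r, N, ε)`-Følner if `Σ_n |I_n ∩ B_D(c,r)| ≥ N` and
`Σ_n |I_n \ B_D(c,r)| < ε · Σ_n |I_n|`. -/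
def CSP.Folner (Φ : CSP V Λ C) (I : ℕ → Set C) (c : C) (r N : ℕ) (ε : ℝ) : Prop :=
  FiniteMTSeq I ∧
    N ≤ {q : C × ℕ | q.1 ∈ I q.2 ∧ q.1 ∈ gball Φ.depGraph c r}.ncard ∧
    ({q : C × ℕ | q.1 ∈ I q.2 ∧ q.1 ∉ gball Φ.depGraph c r}.ncard : ℝ) <
      ε * ({q : C × ℕ | q.1 ∈ I q.2}.ncard : ℝ)

/-- A table is `(c, R, N, ε)`-locally good if for all `r < R` there is no `(c, r, N, ε)`-Følner
MT-sequence consistent with `(Φ_{c,r}, t)`. -/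
noncomputable def CSP.LocallyGoodAt (Φ : CSP V Λ C) (t : V → ℕ → Λ) (c : C) (R N : ℕ)
    (ε : ℝ) : Prop :=
  ∀ r < R, ¬ ∃ I : ℕ → Set C, (Φ.localCSP c r).Consistent t I ∧ Φ.Folner I c r N ε

/-- A table is `(R, N, ε)`-locally good if it is `(c, R, N, ε)`-locally good for every `c`. -/
noncomputable def CSP.LocallyGood (Φ : CSP V Λ C) (t : V → ℕ → Λ) (R N : ℕ) (ε : ℝ) : Prop :=
  ∀ c, Φ.LocallyGoodAt t c R N ε

/-- `dom_R(c) = ⋃_{a ∈ B_D(c,R)} dom(a)`. -/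
def CSP.domR (Φ : CSP V Λ C) (c : C) (R : ℕ) : Set V :=
  ⋃ a ∈ gball Φ.depGraph c R, Φ.dom a

lemma CSP.domR_finite (Φ : CSP V Λ C) (hlf : ∀ c, (Φ.depGraph.neighborSet c).Finite)
    (c : C) (R : ℕ) : (Φ.domR c R).Finite :=
  (gball_finite _ hlf c R).biUnion (fun a _ => Φ.dom_finite a)

/-- The set `LBad_{R,N,ε}(c)` of partial tables `φ : dom_R(c) → Λ^ℕ` such that some
(equivalently, every) table extending `φ` is not `(c, R, N, ε)`-locally good. -/
noncomputable def CSP.LBad (Φ : CSP V Λ C) (c : C) (R N : ℕ) (ε : ℝ) :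
    Set (↥(Φ.domR c R) → ℕ → Λ) :=
  {φ | ∃ t : V → ℕ → Λ, (∀ v : ↥(Φ.domR c R), t v = φ v) ∧
    ¬ Φ.LocallyGoodAt t c R N ε}

/-- The CSP `LG(R, N, ε)` whose solutions are exactly the `(R, N, ε)`-locally good tables. -/
noncomputable def CSP.LG (Φ : CSP V Λ C) (R N : ℕ) (ε : ℝ)
    (h : ∀ c, (Φ.domR c R).Finite) : CSP V (ℕ → Λ) C where
  dom c := Φ.domR c R
  dom_finite := h
  Bad c := Φ.LBad c R N ε

end MT

/-- `Q` is the product of copies of `P` over the index set `ι`: the measure of every measurable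
cylinder is the corresponding finite product. -/
def IsProductOf {ι Λ : Type*} [MeasurableSpace Λ] (Q : Measure (ι → Λ)) (P : Measure Λ) : Prop :=
  ∀ (s : Finset ι) (A : ι → Set Λ), (∀ i ∈ s, MeasurableSet (A i)) →
    Q {g | ∀ i ∈ s, g i ∈ A i} = ∏ i ∈ s, P (A i)

lemma gball_mono {C : Type*} (G : SimpleGraph C) (c : C) : Monotone (gball G c) :=
  monotone_nat_of_le_succ fun _ => Set.subset_union_left

lemma closedNbhd_subset_gball_succ {C : Type*} (G : SimpleGraph C) {c a : C} {r : ℕ}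
    (ha : a ∈ gball G c r) : closedNbhd G a ⊆ gball G c (r + 1) := by
  rintro b (rfl | hb)
  · exact Or.inl ha
  · exact Or.inr (Set.mem_biUnion ha hb)

namespace CSP

variable {V Λ C : Type*}

lemma mem_closedNbhd_of_mem_dom (Φ : CSP V Λ C) {a a' : C} {v : V} (hva : v ∈ Φ.dom a)
    (hva' : v ∈ Φ.dom a') : a' ∈ closedNbhd Φ.depGraph a := by
  by_cases h : a' = a
  · exact Or.inl h
  · exact Or.inr ⟨Ne.symm h, v, hva, hva'⟩

lemma violates_congr (Φ : CSP V Λ C) {f g : V → Λ} {a : C} (hfg : ∀ v ∈ Φ.dom a, f v = g v)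
    (hf : Φ.violates f a) : Φ.violates g a := by
  unfold violates at hf ⊢
  convert hf using 2 with v
  exact (hfg v v.2).symm

lemma localCSP_bad_of_not_mem_gball (Φ : CSP V Λ C) {c a : C} {r : ℕ}
    (ha : a ∉ gball Φ.depGraph c r) : (Φ.localCSP c r).Bad a = Set.univ :=
  if_neg ha

lemma MTlev_inter_of_dom_subset (Φ : CSP V Λ C) (I : ℕ → Set C) {B : Set C} {v : V}
    (hv : ∀ a, v ∈ Φ.dom a → a ∈ B) (n : ℕ) :
    MTlev Φ (fun n => I n ∩ B) n v = MTlev Φ I n v := by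
  induction n with
  | zero => rfl
  | succ n ih =>
    have hiff : (∃ a ∈ I n ∩ B, v ∈ Φ.dom a) ↔ ∃ a ∈ I n, v ∈ Φ.dom a :=
      ⟨fun ⟨a, ha, hva⟩ => ⟨a, ha.1, hva⟩, fun ⟨a, ha, hva⟩ => ⟨a, ⟨ha, hv a hva⟩, hva⟩⟩
    classical
    rw [MTlev, MTlev, ih, if_congr hiff rfl rfl]

/-- On the domain of a constraint whose closed neighbourhood lies in `B`, the levels, hence the
current labeling, are the same for `I` and for `I ∩ B`. -/
theorem Consistent.inter {Φ : CSP V Λ C} {t : V → ℕ → Λ} {I : ℕ → Set C} {B : Set C}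
    (hI : Φ.Consistent t I)
    (hB : ∀ a ∈ B, Φ.Bad a = Set.univ ∨ closedNbhd Φ.depGraph a ⊆ B) :
    Φ.Consistent t (fun n => I n ∩ B) := by
  refine ⟨fun n a ha a' ha' => hI.1 n a ha.1 a' ha'.1, fun n a ⟨haI, haB⟩ => ?_⟩
  rcases hB a haB with hbad | hnbhd
  · exact (hbad ▸ Set.mem_univ _ : _ ∈ Φ.Bad a)
  · refine Φ.violates_congr (fun v hva => ?_) (hI.2 n a haI)
    exact congrArg (t v) (MTlev_inter_of_dom_subset Φ I
      (fun a' hva' => hnbhd (Φ.mem_closedNbhd_of_mem_dom hva hva')) n).symm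

end CSP

theorem restrict_consistent_general
    {V Λ C : Type*} (Φ : CSP V Λ C)
    (c : C) (r : ℕ) (t : V → ℕ → Λ) (I : ℕ → Set C)
    (hcons : (Φ.localCSP c r).Consistent t I)
    (R : ℕ) (hR : r < R) :
    (Φ.localCSP c r).Consistent t (fun n => I n ∩ gball Φ.depGraph c R) := by
  -- `Φ.localCSP c r` has the domains, hence the dependency graph, of `Φ`.
  refine hcons.inter fun a _ => ?_
  by_cases ha : a ∈ gball Φ.depGraph c r
  · exact Or.inr ((closedNbhd_subset_gball_succ _ ha).trans (gball_mono _ _ hR))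
  · exact Or.inl (Φ.localCSP_bad_of_not_mem_gball ha)

/-- **Lemma.** If `I` is an MT-sequence consistent with `(Φ_{c,r}, t)`, then for any `R > r` the
MT-sequence `I' = (I_n ∩ B_D(c,R))_n` is also consistent with `(Φ_{c,r}, t)`. -/
theorem restrict_consistent
    {V Λ C : Type*} (Φ : CSP V Λ C)
    (hlf : ∀ c, (Φ.depGraph.neighborSet c).Finite)
    (c : C) (r : ℕ) (t : V → ℕ → Λ) (I : ℕ → Set C)
    (hcons : (Φ.localCSP c r).Consistent t I)
    (R : ℕ) (hR : r < R) :
    (Φ.localCSP c r).Consistent t (fun n => I n ∩ gball Φ.depGraph c R) :=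
  restrict_consistent_general Φ c r t I hcons R hR
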